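/- Fix α > 0. Then the function θ ↦ ρ_θ(α), defined on (0, π/2] by ρ_θ(α) := ‖exp(Q) − I‖ for any Q ∈ M₂(ℝ) realizing the pair (α, θ), is strictly decreasing in θ. Moreover ρ_{π/2}(α) = e^α − 1, and consequently ρ_θ(α) > α for every θ ∈ (0, π/2]. -/

import Mathlib

open Set Real
open scoped RealInnerProductSpace

/-- The Euclidean plane. -/
abbrev E2 : Type := EuclideanSpace ℝ (Fin 2)

/-- Continuous linear endomorphisms of the Euclidean plane
(2×2 real matrices with the operator norm). -/
abbrev M2 : Type := E2 →L[ℝ] E2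

/-- The angle in `[0, π/2]` between the lines `ℝu` and `ℝv` in the Euclidean plane. -/
noncomputable def lineAngle (u v : E2) : ℝ := Real.arccos (|⟪u, v⟫| / (‖u‖ * ‖v‖))

/-- `Q` realizes the pair `(α, θ)`: it has eigenvalues `α` and `-α`, and the angle
between the corresponding eigenlines is exactly `θ`. -/
def Realizes (Q : M2) (α θ : ℝ) : Prop :=
  ∃ u v : E2, u ≠ 0 ∧ v ≠ 0 ∧ Q u = α • u ∧ Q v = (-α) • v ∧ lineAngle u v = θ

/-! `exp Q - 1` has the eigenvalues `a = e^α - 1` and `b = e^{-α} - 1` on the eigenlines of `Q`.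
In an orthonormal basis whose first vector spans the `a`-eigenline it is upper triangular,
`[[a, k], [0, b]]` with `k = (b - a) cot θ`. The operator norm of such a matrix, its largest
singular value, is a strictly increasing function of `k²`; as `cot θ` decreases to `0` on
`(0, π/2]`, the norm decreases to `max |a| |b| = a`, and it always exceeds `|a| > α`. -/

section Exponential

variable {𝕂 E : Type*} [RCLike 𝕂] [NormedAddCommGroup E] [NormedSpace 𝕂 E] [CompleteSpace E]

theorem ContinuousLinearMap.exp_apply_of_apply_eq_smul {Q : E →L[𝕂] E} {u : E} {c : 𝕂}
    (h : Q u = c • u) : NormedSpace.exp Q u = NormedSpace.exp c • u := by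
  have hpow (n : ℕ) : (Q ^ n) u = c ^ n • u := by
    induction n with
    | zero => simp
    | succ n ih => rw [pow_succ, mul_apply_eq_comp, h, map_smul, ih, smul_smul, pow_succ']
  refine ((NormedSpace.exp_series_hasSum_exp' (𝕂 := 𝕂) Q).mapL (apply 𝕂 E u)).unique ?_
  simpa only [apply_apply, smul_apply, hpow, smul_smul, smul_eq_mul] using
    (NormedSpace.exp_series_hasSum_exp' (𝕂 := 𝕂) c).smul_const u

end Exponential

section UpperTriangularNorm

lemma two_mul_abs_mul_le_add_sq (a b : ℝ) : 2 * |a * b| ≤ a ^ 2 + b ^ 2 := by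
  simpa only [abs_mul, mul_assoc, sq_abs] using two_mul_le_add_sq |a| |b|

/-- The operator norm of `[[a, k], [0, b]]`: its singular values `σ₁ ≥ σ₂` satisfy
`(σ₁ ± σ₂)² = a² + b² + k² ± 2 |a b|`. -/
noncomputable def upperTriangularNorm (a b k : ℝ) : ℝ :=
  (√(a ^ 2 + b ^ 2 + k ^ 2 + 2 * |a * b|) + √(a ^ 2 + b ^ 2 + k ^ 2 - 2 * |a * b|)) / 2

variable (a b k : ℝ)

lemma upperTriangularNorm_nonneg : 0 ≤ upperTriangularNorm a b k := by
  unfold upperTriangularNorm; positivity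

lemma sq_upperTriangularNorm :
    upperTriangularNorm a b k ^ 2 =
      (a ^ 2 + b ^ 2 + k ^ 2 + √((a ^ 2 + b ^ 2 + k ^ 2) ^ 2 - 4 * (a * b) ^ 2)) / 2 := by
  have h := two_mul_abs_mul_le_add_sq a b
  have hS : 0 ≤ a ^ 2 + b ^ 2 + k ^ 2 + 2 * |a * b| := by positivity
  have hD : (a ^ 2 + b ^ 2 + k ^ 2) ^ 2 - 4 * (a * b) ^ 2 =
      (a ^ 2 + b ^ 2 + k ^ 2 + 2 * |a * b|) * (a ^ 2 + b ^ 2 + k ^ 2 - 2 * |a * b|) := by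
    rw [← sq_abs (a * b)]; ring
  rw [hD, sqrt_mul hS, upperTriangularNorm, div_pow, add_sq, sq_sqrt hS,
    sq_sqrt (by linarith [sq_nonneg k])]
  ring

lemma upperTriangularNorm_sq_sub_mul :
    (upperTriangularNorm a b k ^ 2 - a ^ 2) * (upperTriangularNorm a b k ^ 2 - (b ^ 2 + k ^ 2)) =
      (a * k) ^ 2 := by
  have h := two_mul_abs_mul_le_add_sq a b
  have hr := sq_sqrt (show 0 ≤ (a ^ 2 + b ^ 2 + k ^ 2) ^ 2 - 4 * (a * b) ^ 2 by
    rw [← sq_abs (a * b)]; nlinarith [abs_nonneg (a * b), sq_nonneg k])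
  rw [sq_upperTriangularNorm]
  linear_combination hr / 4

lemma sq_le_sq_upperTriangularNorm :
    a ^ 2 ≤ upperTriangularNorm a b k ^ 2 ∧ b ^ 2 + k ^ 2 ≤ upperTriangularNorm a b k ^ 2 := by
  have hprod := upperTriangularNorm_sq_sub_mul a b k
  have hsum : 0 ≤ (upperTriangularNorm a b k ^ 2 - a ^ 2) +
      (upperTriangularNorm a b k ^ 2 - (b ^ 2 + k ^ 2)) := by
    rw [sq_upperTriangularNorm]
    linarith [sqrt_nonneg ((a ^ 2 + b ^ 2 + k ^ 2) ^ 2 - 4 * (a * b) ^ 2)]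
  constructor <;> nlinarith [sq_nonneg (a * k)]

lemma abs_le_upperTriangularNorm : |a| ≤ upperTriangularNorm a b k :=
  abs_le_of_sq_le_sq (sq_le_sq_upperTriangularNorm a b k).1 (upperTriangularNorm_nonneg a b k)

lemma upperTriangularNorm_zero : upperTriangularNorm a b 0 = max |a| |b| := by
  have h₁ : a ^ 2 + b ^ 2 + 0 ^ 2 + 2 * |a * b| = (|a| + |b|) ^ 2 := by
    rw [abs_mul]; nlinarith [sq_abs a, sq_abs b]
  have h₂ : a ^ 2 + b ^ 2 + 0 ^ 2 - 2 * |a * b| = (|a| - |b|) ^ 2 := by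
    rw [abs_mul]; nlinarith [sq_abs a, sq_abs b]
  rw [upperTriangularNorm, h₁, h₂, sqrt_sq (by positivity), sqrt_sq_eq_abs]
  rcases le_total |a| |b| with h | h
  · rw [max_eq_right h, abs_of_nonpos (sub_nonpos.2 h)]; ring
  · rw [max_eq_left h, abs_of_nonneg (sub_nonneg.2 h)]; ring

variable {k} in
lemma upperTriangularNorm_lt_of_sq_lt {k' : ℝ} (h : k ^ 2 < k' ^ 2) :
    upperTriangularNorm a b k < upperTriangularNorm a b k' := by
  have h₁ := sqrt_lt_sqrt (by positivity) (show a ^ 2 + b ^ 2 + k ^ 2 + 2 * |a * b| <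
    a ^ 2 + b ^ 2 + k' ^ 2 + 2 * |a * b| by linarith)
  have h₂ := sqrt_lt_sqrt (by linarith [two_mul_abs_mul_le_add_sq a b, sq_nonneg k]) (show
    a ^ 2 + b ^ 2 + k ^ 2 - 2 * |a * b| < a ^ 2 + b ^ 2 + k' ^ 2 - 2 * |a * b| by linarith)
  unfold upperTriangularNorm
  linarith

end UpperTriangularNorm

section SingularQuadraticForm

variable {P R m : ℝ}

lemma two_mul_mul_le_of_mul_eq_sq (hP : 0 ≤ P) (hR : 0 ≤ R) (h : P * R = m ^ 2) (c d : ℝ) :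
    2 * m * c * d ≤ P * c ^ 2 + R * d ^ 2 := by
  rcases hP.eq_or_lt with rfl | hP
  · obtain rfl : m = 0 := by simpa using h.symm
    nlinarith [sq_nonneg d]
  · nlinarith [sq_nonneg (P * c - m * d), sq_nonneg d]

lemma exists_two_mul_mul_eq_of_mul_eq_sq (hP : 0 ≤ P) (h : P * R = m ^ 2) :
    ∃ c d : ℝ, 0 < c ^ 2 + d ^ 2 ∧ 2 * m * c * d = P * c ^ 2 + R * d ^ 2 := by
  rcases hP.eq_or_lt with rfl | hP
  · obtain rfl : m = 0 := by simpa using h.symm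
    exact ⟨1, 0, by norm_num, by ring⟩
  · exact ⟨m, P, by positivity, by linear_combination (-P) * h⟩

end SingularQuadraticForm

section InnerProductSpace

variable {E : Type*} [NormedAddCommGroup E] [InnerProductSpace ℝ E]

lemma OrthonormalBasis.norm_sq_smul_add_smul (e : OrthonormalBasis (Fin 2) ℝ E) (c d : ℝ) :
    ‖c • e 0 + d • e 1‖ ^ 2 = c ^ 2 + d ^ 2 := by
  rw [← real_inner_self_eq_norm_sq]
  simp only [inner_add_left, inner_add_right, real_inner_smul_left, real_inner_smul_right,
    e.inner_eq_ite, if_pos, one_ne_zero, zero_ne_one, if_false]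
  ring

lemma OrthonormalBasis.exists_eq_smul_add_smul (e : OrthonormalBasis (Fin 2) ℝ E) (x : E) :
    ∃ c d : ℝ, x = c • e 0 + d • e 1 :=
  ⟨_, _, by simpa only [Fin.sum_univ_two] using (e.sum_repr x).symm⟩

theorem opNorm_eq_upperTriangularNorm (e : OrthonormalBasis (Fin 2) ℝ E) {M : E →L[ℝ] E}
    {a b k : ℝ} (h₀ : M (e 0) = a • e 0) (h₁ : M (e 1) = k • e 0 + b • e 1) :
    ‖M‖ = upperTriangularNorm a b k := by
  set g := upperTriangularNorm a b k
  have hg : 0 ≤ g := upperTriangularNorm_nonneg a b k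
  obtain ⟨hP, hR⟩ := sq_le_sq_upperTriangularNorm a b k
  have hPR := upperTriangularNorm_sq_sub_mul a b k
  -- `g²` is the larger root of `(t - a²) (t - b² - k²) = (a k)²`, so the gap is a degenerate
  -- positive semidefinite quadratic form in `(c, d)`.
  have hgap (c d : ℝ) : (g * ‖c • e 0 + d • e 1‖) ^ 2 - ‖M (c • e 0 + d • e 1)‖ ^ 2 =
      (g ^ 2 - a ^ 2) * c ^ 2 + (g ^ 2 - (b ^ 2 + k ^ 2)) * d ^ 2 - 2 * (a * k) * c * d := by
    rw [map_add, map_smul, map_smul, h₀, h₁, mul_pow, e.norm_sq_smul_add_smul,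
      show c • a • e 0 + d • (k • e 0 + b • e 1) = (a * c + k * d) • e 0 + (b * d) • e 1 by
        module, e.norm_sq_smul_add_smul]
    ring
  apply le_antisymm
  · refine M.opNorm_le_bound hg fun x => ?_
    obtain ⟨c, d, rfl⟩ := e.exists_eq_smul_add_smul x
    have := two_mul_mul_le_of_mul_eq_sq (sub_nonneg.2 hP) (sub_nonneg.2 hR) hPR c d
    exact (pow_le_pow_iff_left₀ (norm_nonneg _) (by positivity) two_ne_zero).1
      (by linarith [hgap c d])
  · obtain ⟨c, d, hcd, heq⟩ := exists_two_mul_mul_eq_of_mul_eq_sq (sub_nonneg.2 hP) hPR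
    have hx : 0 < ‖c • e 0 + d • e 1‖ := by
      rw [← e.norm_sq_smul_add_smul] at hcd
      exact (norm_nonneg _).lt_of_ne' (sq_pos_iff.1 hcd)
    have hMx : ‖M (c • e 0 + d • e 1)‖ = g * ‖c • e 0 + d • e 1‖ :=
      (sq_eq_sq₀ (norm_nonneg _) (by positivity)).1 (by linarith [hgap c d])
    exact le_of_mul_le_mul_right (hMx ▸ M.le_opNorm _) hx

lemma exists_norm_smul_eq_one_inner_eq_abs {u v : E} (hu : u ≠ 0) (hv : v ≠ 0) :
    ∃ s t : ℝ, ‖s • u‖ = 1 ∧ ‖t • v‖ = 1 ∧ ⟪s • u, t • v⟫ = |⟪u, v⟫| / (‖u‖ * ‖v‖) := by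
  obtain ⟨ε, hε, hεuv⟩ : ∃ ε : ℝ, |ε| = 1 ∧ ε * ⟪u, v⟫ = |⟪u, v⟫| := by
    rcases le_total 0 ⟪u, v⟫ with h | h
    · exact ⟨1, abs_one, by rw [one_mul, abs_of_nonneg h]⟩
    · exact ⟨-1, by simp, by rw [neg_one_mul, abs_of_nonpos h]⟩
  have hu' := norm_ne_zero_iff.2 hu
  have hv' := norm_ne_zero_iff.2 hv
  refine ⟨‖u‖⁻¹, ε * ‖v‖⁻¹, ?_, ?_, ?_⟩
  · rw [norm_smul, norm_inv, norm_norm, inv_mul_cancel₀ hu']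
  · rw [norm_smul, norm_mul, norm_inv, norm_norm, norm_eq_abs, hε, one_mul, inv_mul_cancel₀ hv']
  · rw [real_inner_smul_left, real_inner_smul_right, ← hεuv]
    field_simp

lemma exists_orthonormalBasis_eq_cos_smul_add_sin_smul [FiniteDimensional ℝ E]
    (hE : Module.finrank ℝ E = 2) {u v : E} (hu : ‖u‖ = 1) (hv : ‖v‖ = 1) {θ : ℝ}
    (huv : ⟪u, v⟫ = cos θ) (hθ : sin θ ≠ 0) :
    ∃ e : OrthonormalBasis (Fin 2) ℝ E, e 0 = u ∧ v = cos θ • e 0 + sin θ • e 1 := by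
  set w := (sin θ)⁻¹ • (v - cos θ • u)
  have hv_eq : v = cos θ • u + sin θ • w := by
    rw [smul_smul, mul_inv_cancel₀ hθ, one_smul, add_sub_cancel]
  have huw : ⟪u, w⟫ = 0 := by
    simp only [w, real_inner_smul_right, inner_sub_right, huv, real_inner_self_eq_norm_sq, hu]
    ring
  have hw : ‖w‖ = 1 := by
    have h : ‖v - cos θ • u‖ = |sin θ| := by
      rw [← sq_eq_sq₀ (norm_nonneg _) (abs_nonneg _), norm_sub_sq_real, real_inner_smul_right,
        real_inner_comm, huv, norm_smul, hu, hv, mul_one, norm_eq_abs, sq_abs, sq_abs]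
      linear_combination -sin_sq_add_cos_sq θ
    rw [norm_smul, norm_inv, norm_eq_abs, h, inv_mul_cancel₀ (abs_ne_zero.2 hθ)]
  have hon : Orthonormal ℝ ![u, w] := by
    rw [orthonormal_iff_ite]
    intro i j
    fin_cases i <;> fin_cases j <;> simp [hu, hw, huw, real_inner_comm u w]
  exact ⟨OrthonormalBasis.mk hon (hon.linearIndependent.span_eq_top_of_card_eq_finrank'
    (by rw [hE, Fintype.card_fin])).ge, by simp, by simpa using hv_eq⟩

end InnerProductSpace

lemma LinearMap.apply_eq_smul_add_smul_of_eigenvectors {K V : Type*} [Field K] [AddCommGroup V]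
    [Module K V] (f : V →ₗ[K] V) {x y : V} {a b c s : K} (hs : s ≠ 0) (hx : f x = a • x)
    (hv : f (c • x + s • y) = b • (c • x + s • y)) : f y = ((b - a) * c / s) • x + b • y := by
  apply smul_right_injective V hs
  rw [map_add, map_smul, map_smul, hx] at hv
  dsimp only
  rw [smul_add, smul_smul, mul_div_cancel₀ _ hs]
  linear_combination (norm := module) hv

namespace Real

lemma cot_strictAntiOn : StrictAntiOn cot (Ioo 0 π) := by
  intro x hx y hy hxy
  have hsin := sin_pos_of_pos_of_lt_pi (sub_pos.2 hxy) (by linarith [hx.1, hy.2])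
  rw [sin_sub] at hsin
  rw [cot_eq_cos_div_sin, cot_eq_cos_div_sin,
    div_lt_div_iff₀ (sin_pos_of_pos_of_lt_pi hy.1 hy.2) (sin_pos_of_pos_of_lt_pi hx.1 hx.2)]
  linarith

lemma cot_nonneg {x : ℝ} (hx : x ∈ Icc 0 (π / 2)) : 0 ≤ cot x := by
  rw [cot_eq_cos_div_sin]
  exact div_nonneg (cos_nonneg_of_mem_Icc ⟨by linarith [hx.1, pi_pos], hx.2⟩)
    (sin_nonneg_of_nonneg_of_le_pi hx.1 (by linarith [hx.2, pi_pos]))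

end Real

lemma cos_lineAngle (u v : E2) : cos (lineAngle u v) = |⟪u, v⟫| / (‖u‖ * ‖v‖) :=
  cos_arccos (by linarith [show 0 ≤ |⟪u, v⟫| / (‖u‖ * ‖v‖) by positivity])
    (div_le_one_of_le₀ (abs_real_inner_le_norm u v) (by positivity))

lemma lineAngle_le_pi_div_two (u v : E2) : lineAngle u v ≤ π / 2 :=
  arccos_le_pi_div_two.2 (by positivity)

theorem norm_eq_upperTriangularNorm_of_eigenvectors {M : M2} {u v : E2} {a b : ℝ} (hu : u ≠ 0)
    (hv : v ≠ 0) (hMu : M u = a • u) (hMv : M v = b • v) (hθ : 0 < lineAngle u v) :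
    ‖M‖ = upperTriangularNorm a b ((b - a) * cot (lineAngle u v)) := by
  set θ := lineAngle u v
  have hsin : sin θ ≠ 0 := (sin_pos_of_pos_of_lt_pi hθ
    ((lineAngle_le_pi_div_two u v).trans_lt (by linarith [pi_pos]))).ne'
  obtain ⟨s, t, hsu, htv, hst⟩ := exists_norm_smul_eq_one_inner_eq_abs hu hv
  rw [← cos_lineAngle] at hst
  obtain ⟨e, he₀, he₁⟩ :=
    exists_orthonormalBasis_eq_cos_smul_add_sin_smul finrank_euclideanSpace_fin hsu htv hst hsin
  have hMe₀ : M (e 0) = a • e 0 := by rw [he₀, map_smul, hMu, smul_comm]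
  refine opNorm_eq_upperTriangularNorm e hMe₀ ?_
  rw [cot_eq_cos_div_sin, ← mul_div_assoc]
  refine (M : E2 →ₗ[ℝ] E2).apply_eq_smul_add_smul_of_eigenvectors hsin hMe₀ ?_
  rw [← he₁]
  exact (map_smul M t v).trans (by rw [hMv, smul_comm])

theorem exists_realizes (α : ℝ) {θ : ℝ} (hθ : θ ∈ Ioc 0 (π / 2)) : ∃ Q : M2, Realizes Q α θ := by
  set e := EuclideanSpace.basisFun (Fin 2) ℝ
  set v := cos θ • e 0 + sin θ • e 1
  set Q : M2 := LinearMap.toContinuousLinearMap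
    (e.toBasis.constr ℝ ![α • e 0, (-2 * α * cot θ) • e 0 + (-α) • e 1])
  have hQ (i : Fin 2) : Q (e i) = ![α • e 0, (-2 * α * cot θ) • e 0 + (-α) • e 1] i := by
    have h := e.toBasis.constr_basis ℝ ![α • e 0, (-2 * α * cot θ) • e 0 + (-α) • e 1] i
    rwa [e.coe_toBasis] at h
  have hsin : sin θ ≠ 0 := (sin_pos_of_pos_of_lt_pi hθ.1 (by linarith [hθ.2, pi_pos])).ne'
  have hv : ‖v‖ = 1 := by
    rw [← pow_eq_one_iff_of_nonneg (norm_nonneg v) two_ne_zero, e.norm_sq_smul_add_smul,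
      cos_sq_add_sin_sq]
  have hinner : ⟪e 0, v⟫ = cos θ := by
    simp only [v, inner_add_right, real_inner_smul_right, e.inner_eq_ite, if_pos, zero_ne_one,
      if_false]
    ring
  refine ⟨Q, e 0, v, e.toBasis.ne_zero 0, norm_ne_zero_iff.1 (hv ▸ one_ne_zero), hQ 0, ?_, ?_⟩
  · rw [map_add, map_smul, map_smul, hQ 0, hQ 1, cot_eq_cos_div_sin]
    simp only [Matrix.cons_val_zero, Matrix.cons_val_one, v]
    match_scalars
    · field_simp
      ring
    · ring
  · rw [lineAngle, hv, e.norm_eq_one, hinner, mul_one, div_one,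
      abs_of_nonneg (cos_nonneg_of_mem_Icc ⟨by linarith [hθ.1, pi_pos], hθ.2⟩),
      arccos_cos hθ.1.le (by linarith [hθ.2, pi_pos])]

/-- For fixed `α > 0`, the function `θ ↦ ρ_θ(α) = ‖exp(Q) − I‖` (for `Q` realizing
`(α, θ)`) is strictly decreasing on `(0, π/2]`, equals `e^α − 1` at `θ = π/2`, and is
everywhere greater than `α`. -/
theorem rho_strictAnti_in_theta (α : ℝ) (hα : 0 < α) :
    ∃ ρ : ℝ → ℝ,
      (∀ θ ∈ Set.Ioc (0 : ℝ) (π / 2), ∃ Q : M2, Realizes Q α θ) ∧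
      (∀ θ ∈ Set.Ioc (0 : ℝ) (π / 2), ∀ Q : M2, Realizes Q α θ →
        ρ θ = ‖NormedSpace.exp Q - 1‖) ∧
      StrictAntiOn ρ (Set.Ioc 0 (π / 2)) ∧
      ρ (π / 2) = Real.exp α - 1 ∧
      (∀ θ ∈ Set.Ioc (0 : ℝ) (π / 2), α < ρ θ) := by
  set a := exp α - 1
  set b := exp (-α) - 1
  have hαa : α < a := by linarith [add_one_lt_exp hα.ne']
  have hba : b < a := by linarith [exp_lt_exp.2 (show -α < α by linarith)]
  have hb : |b| ≤ a := abs_le.2 ⟨by linarith [add_one_le_exp α, add_one_le_exp (-α)], hba.le⟩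
  have hexp {Q : M2} {u : E2} {c : ℝ} (h : Q u = c • u) :
      (NormedSpace.exp Q - 1) u = (exp c - 1) • u := by
    rw [sub_apply, ContinuousLinearMap.exp_apply_of_apply_eq_smul h, ← exp_eq_exp_ℝ, sub_smul,
      one_smul, one_apply_eq_self]
  refine ⟨fun θ => upperTriangularNorm a b ((b - a) * cot θ), fun θ hθ => exists_realizes α hθ,
    ?_, ?_, ?_, fun θ _ => hαa.trans_le ((le_abs_self a).trans (abs_le_upperTriangularNorm ..))⟩
  · rintro θ hθ Q ⟨u, v, hu, hv, hQu, hQv, rfl⟩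
    exact (norm_eq_upperTriangularNorm_of_eigenvectors hu hv (hexp hQu) (hexp hQv) hθ.1).symm
  · intro θ₁ hθ₁ θ₂ hθ₂ h
    have := cot_nonneg ⟨hθ₂.1.le, hθ₂.2⟩
    have := cot_strictAntiOn ⟨hθ₁.1, by linarith [hθ₁.2, pi_pos]⟩
      ⟨hθ₂.1, by linarith [hθ₂.2, pi_pos]⟩ h
    apply upperTriangularNorm_lt_of_sq_lt
    rw [mul_pow, mul_pow]
    gcongr
    exact sq_pos_of_neg (sub_neg.2 hba)
  · simp only [cot_eq_cos_div_sin, cos_pi_div_two, zero_div, mul_zero, upperTriangularNorm_zero,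
      abs_of_pos (hα.trans hαa)]
    exact max_eq_left hb
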